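/- For any finite sequence of closed unit intervals presented online with clique number ω, the total number of colors used by the Kierstead–Trotter algorithm is at most 1 when ω = 1, and at most 1 + 2 + 3(ω − 2) = 3ω − 3 when ω ≥ 2; in particular, at level 1 at most one color is used, at level 2 at most two colors are used, and at each level j with 3 ≤ j ≤ ω at most three colors are used. -/
import Mathlib


open Set

/-- `ℓ` is the Kierstead–Trotter level function for the online sequence of
intervals `I 0, I 1, …, I (n-1)`: `ℓ i` is the least positive integer `j`
such that every point `x ∈ I i` lies in at most `j - 1` earlier intervals of
level at most `j`. -/
def IsKTLevel {n : ℕ} (I : Fin n → Set ℝ) (ℓ : Fin n → ℕ) : Prop :=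
  ∀ i : Fin n,
    IsLeast { j : ℕ | 1 ≤ j ∧ ∀ x ∈ I i,
      Set.ncard { k : Fin n | k < i ∧ x ∈ I k ∧ ℓ k ≤ j } ≤ j - 1 } (ℓ i)

/-- `c` is the First-Fit coloring within each level: `c i` is the least
positive integer different from `c k` for every earlier `k` with the same
level whose interval intersects `I i`. -/
def IsKTFirstFit {n : ℕ} (I : Fin n → Set ℝ) (ℓ c : Fin n → ℕ) : Prop :=
  ∀ i : Fin n,
    IsLeast { m : ℕ | 1 ≤ m ∧ ∀ k : Fin n, k < i → ℓ k = ℓ i →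
      (I k ∩ I i).Nonempty → c k ≠ m } (c i)

/-- The number of distinct First-Fit colors used at level `j`. -/
def colorsAtLevel {n : ℕ} (ℓ c : Fin n → ℕ) (j : ℕ) : ℕ :=
  ((Finset.univ.filter (fun i : Fin n => ℓ i = j)).image c).card

/-- The total number of colors used by the Kierstead–Trotter algorithm:
colors at distinct levels come from pairwise disjoint palettes, so this is
the number of distinct (level, color) pairs used, i.e. the sum over levels
of the number of distinct First-Fit colors used at that level. -/
def totalColors {n : ℕ} (ℓ c : Fin n → ℕ) : ℕ :=
  (Finset.univ.image (fun i : Fin n => (ℓ i, c i))).card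

/-- The clique number of the sequence of intervals: the maximum over points
`x ∈ ℝ` of the number of indices `i` with `x ∈ I i`. -/
noncomputable def cliqueNum {n : ℕ} (I : Fin n → Set ℝ) : ℕ :=
  sSup { m : ℕ | ∃ x : ℝ, m = Set.ncard { i : Fin n | x ∈ I i } }

section KT
variable {n : ℕ} {a : Fin n → ℝ} {ℓ : Fin n → ℕ}

lemma level_pos (hℓ : IsKTLevel (fun i => Icc (a i) (a i + 1)) ℓ) (i : Fin n) : 1 ≤ ℓ i :=
  (hℓ i).1.1

lemma level_mem (hℓ : IsKTLevel (fun i => Icc (a i) (a i + 1)) ℓ) (i : Fin n)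
    {x : ℝ} (hx : x ∈ Icc (a i) (a i + 1)) :
    Set.ncard { k : Fin n | k < i ∧ x ∈ Icc (a k) (a k + 1) ∧ ℓ k ≤ ℓ i } ≤ ℓ i - 1 :=
  (hℓ i).1.2 x hx

lemma witness_exists (hℓ : IsKTLevel (fun i => Icc (a i) (a i + 1)) ℓ) (i : Fin n)
    (h2 : 2 ≤ ℓ i) :
    ∃ y ∈ Icc (a i) (a i + 1),
      ℓ i - 1 ≤ Set.ncard { k : Fin n | k < i ∧ y ∈ Icc (a k) (a k + 1) ∧ ℓ k ≤ ℓ i - 1 } := by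
  have hnot : ℓ i - 1 ∉ { j : ℕ | 1 ≤ j ∧ ∀ x ∈ Icc (a i) (a i + 1),
      Set.ncard { k : Fin n | k < i ∧ x ∈ Icc (a k) (a k + 1) ∧ ℓ k ≤ j } ≤ j - 1 } := by
    intro hmem
    have := (hℓ i).2 hmem
    omega
  simp only [Set.mem_setOf_eq, not_and, not_forall] at hnot
  obtain ⟨y, hy, hcount⟩ := hnot (by omega)
  exact ⟨y, hy, by omega⟩

/-- witness point together with its count and privateness -/
lemma private_point (hℓ : IsKTLevel (fun i => Icc (a i) (a i + 1)) ℓ) (i : Fin n)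
    (h2 : 2 ≤ ℓ i) :
    ∃ y ∈ Icc (a i) (a i + 1),
      (ℓ i - 1 ≤ Set.ncard { k : Fin n | k < i ∧ y ∈ Icc (a k) (a k + 1) ∧ ℓ k ≤ ℓ i - 1 }) ∧
      ∀ k : Fin n, k ≠ i → ℓ k = ℓ i → y ∉ Icc (a k) (a k + 1) := by
  obtain ⟨y, hy, hcount⟩ := witness_exists hℓ i h2
  refine ⟨y, hy, hcount, ?_⟩
  intro k hki hlk hyk
  set S : Set (Fin n) := { m : Fin n | m < i ∧ y ∈ Icc (a m) (a m + 1) ∧ ℓ m ≤ ℓ i - 1 } with hS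
  rcases hki.lt_or_gt with hlt | hlt
  · -- k < i
    set T : Set (Fin n) := { m : Fin n | m < i ∧ y ∈ Icc (a m) (a m + 1) ∧ ℓ m ≤ ℓ i } with hT
    have hST : S ⊆ T := fun m hm => ⟨hm.1, hm.2.1, by have := hm.2.2; omega⟩
    have hTle : T.ncard ≤ ℓ i - 1 := level_mem hℓ i hy
    have heq : S = T := Set.eq_of_subset_of_ncard_le hST (le_trans hTle hcount)
    have hkT : k ∈ T := ⟨hlt, hyk, le_of_eq hlk⟩
    rw [← heq] at hkT
    have := hkT.2.2
    omega
  · -- i < k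
    have hkmem := level_mem hℓ k hyk
    have hiS : i ∉ S := fun h => by have := h.2.2; omega
    have hsub : insert i S ⊆ { m : Fin n | m < k ∧ y ∈ Icc (a m) (a m + 1) ∧ ℓ m ≤ ℓ k } := by
      rintro m (rfl | hm)
      · exact ⟨hlt, hy, by omega⟩
      · exact ⟨lt_trans hm.1 hlt, hm.2.1, by have := hm.2.2; omega⟩
    have hins : (insert i S).ncard = S.ncard + 1 := Set.ncard_insert_of_notMem hiS
    have hle := Set.ncard_le_ncard hsub (Set.toFinite _)
    omega


/-- Two same-level earlier neighbours of `i` on the same side of a private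
point `y` of `i` must coincide. -/
lemma side_uniq (hℓ : IsKTLevel (fun i => Icc (a i) (a i + 1)) ℓ) {i : Fin n} {y : ℝ}
    (hy : y ∈ Icc (a i) (a i + 1)) (h2 : 2 ≤ ℓ i) {k1 k2 : Fin n}
    (hk1 : k1 < i ∧ ℓ k1 = ℓ i ∧ (Icc (a k1) (a k1 + 1) ∩ Icc (a i) (a i + 1)).Nonempty)
    (hk2 : k2 < i ∧ ℓ k2 = ℓ i ∧ (Icc (a k2) (a k2 + 1) ∩ Icc (a i) (a i + 1)).Nonempty)
    (hside : (a k1 + 1 < y ∧ a k2 + 1 < y) ∨ (y < a k1 ∧ y < a k2)) : k1 = k2 := by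
  by_contra hne
  obtain ⟨y1, hy1m, -, hp1⟩ := private_point hℓ k1 (by rw [hk1.2.1]; exact h2)
  obtain ⟨y2, hy2m, -, hp2⟩ := private_point hℓ k2 (by rw [hk2.2.1]; exact h2)
  have e12 : y1 ∉ Icc (a k2) (a k2 + 1) := hp1 k2 (Ne.symm hne) (by rw [hk1.2.1, hk2.2.1])
  have e21 : y2 ∉ Icc (a k1) (a k1 + 1) := hp2 k1 hne (by rw [hk1.2.1, hk2.2.1])
  have e1i : y1 ∉ Icc (a i) (a i + 1) := hp1 i (ne_of_gt hk1.1) hk1.2.1.symm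
  have e2i : y2 ∉ Icc (a i) (a i + 1) := hp2 i (ne_of_gt hk2.1) hk2.2.1.symm
  obtain ⟨x1, hx1k, hx1i⟩ := hk1.2.2
  obtain ⟨x2, hx2k, hx2i⟩ := hk2.2.2
  simp only [mem_Icc, not_and, not_le] at hy hy1m hy2m e12 e21 e1i e2i hx1k hx1i hx2k hx2i
  rcases hside with ⟨hs1, hs2⟩ | ⟨hs1, hs2⟩
  · -- both left of y
    have h1i : y1 < a i := by
      by_contra h; push_neg at h
      have := e1i h; linarith [hy1m.2]
    have h12 : y1 < a k2 := by
      by_contra h; push_neg at h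
      have := e12 h; linarith [hx2k.1, hx2i.1]
    have h2i : y2 < a i := by
      by_contra h; push_neg at h
      have := e2i h; linarith [hy2m.2]
    have h21 : y2 < a k1 := by
      by_contra h; push_neg at h
      have := e21 h; linarith [hx1k.1, hx1i.1]
    linarith [hy1m.1, hy2m.1]
  · -- both right of y
    have h1i : a i + 1 < y1 := by
      have : a i ≤ y1 := le_trans hy.1 (le_trans (le_of_lt hs1) hy1m.1)
      exact e1i this
    have h12 : a k2 + 1 < y1 := by
      have : a k2 ≤ y1 := by
        have hk2le : a k2 ≤ a i + 1 := le_trans hx2k.1 hx2i.2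
        linarith
      exact e12 this
    have h2i : a i + 1 < y2 := by
      have : a i ≤ y2 := le_trans hy.1 (le_trans (le_of_lt hs2) hy2m.1)
      exact e2i this
    have h21 : a k1 + 1 < y2 := by
      have : a k1 ≤ y2 := by
        have hk1le : a k1 ≤ a i + 1 := le_trans hx1k.1 hx1i.2
        linarith
      exact e21 this
    linarith [hy1m.2, hy2m.2]


lemma neighbors_le_two (hℓ : IsKTLevel (fun i => Icc (a i) (a i + 1)) ℓ) (i : Fin n)
    (h2 : 2 ≤ ℓ i) :
    ∃ k1 k2 : Fin n, ∀ k : Fin n, k < i → ℓ k = ℓ i →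
      (Icc (a k) (a k + 1) ∩ Icc (a i) (a i + 1)).Nonempty → k = k1 ∨ k = k2 := by
  classical
  obtain ⟨y, hy, -, hpriv⟩ := private_point hℓ i h2
  have hside : ∀ k : Fin n, k < i → ℓ k = ℓ i →
      (Icc (a k) (a k + 1) ∩ Icc (a i) (a i + 1)).Nonempty →
      a k + 1 < y ∨ y < a k := by
    intro k hk hlk _
    have := hpriv k (ne_of_lt hk) hlk
    simp only [mem_Icc, not_and, not_le] at this
    rcases le_or_gt (a k) y with h | h
    · exact Or.inl (this h)
    · exact Or.inr h
  by_cases hL : ∃ k : Fin n, (k < i ∧ ℓ k = ℓ i ∧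
      (Icc (a k) (a k + 1) ∩ Icc (a i) (a i + 1)).Nonempty) ∧ a k + 1 < y
  · obtain ⟨kL, hkL, hkLy⟩ := hL
    by_cases hR : ∃ k : Fin n, (k < i ∧ ℓ k = ℓ i ∧
        (Icc (a k) (a k + 1) ∩ Icc (a i) (a i + 1)).Nonempty) ∧ y < a k
    · obtain ⟨kR, hkR, hkRy⟩ := hR
      refine ⟨kL, kR, fun k hk hlk hne => ?_⟩
      rcases hside k hk hlk hne with h | h
      · exact Or.inl (side_uniq hℓ hy h2 ⟨hk, hlk, hne⟩ hkL (Or.inl ⟨h, hkLy⟩))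
      · exact Or.inr (side_uniq hℓ hy h2 ⟨hk, hlk, hne⟩ hkR (Or.inr ⟨h, hkRy⟩))
    · refine ⟨kL, kL, fun k hk hlk hne => ?_⟩
      rcases hside k hk hlk hne with h | h
      · exact Or.inl (side_uniq hℓ hy h2 ⟨hk, hlk, hne⟩ hkL (Or.inl ⟨h, hkLy⟩))
      · exact absurd ⟨k, ⟨hk, hlk, hne⟩, h⟩ hR
  · by_cases hR : ∃ k : Fin n, (k < i ∧ ℓ k = ℓ i ∧
        (Icc (a k) (a k + 1) ∩ Icc (a i) (a i + 1)).Nonempty) ∧ y < a k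
    · obtain ⟨kR, hkR, hkRy⟩ := hR
      refine ⟨kR, kR, fun k hk hlk hne => ?_⟩
      rcases hside k hk hlk hne with h | h
      · exact absurd ⟨k, ⟨hk, hlk, hne⟩, h⟩ hL
      · exact Or.inl (side_uniq hℓ hy h2 ⟨hk, hlk, hne⟩ hkR (Or.inr ⟨h, hkRy⟩))
    · refine ⟨i, i, fun k hk hlk hne => ?_⟩
      rcases hside k hk hlk hne with h | h
      · exact absurd ⟨k, ⟨hk, hlk, hne⟩, h⟩ hL
      · exact absurd ⟨k, ⟨hk, hlk, hne⟩, h⟩ hR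

/-- at level 2, a left neighbour and a right neighbour of the private point
cannot coexist. -/
lemma no_opposite (hℓ : IsKTLevel (fun i => Icc (a i) (a i + 1)) ℓ) {i : Fin n}
    (h2 : ℓ i = 2) {y : ℝ} (hy : y ∈ Icc (a i) (a i + 1))
    {w : Fin n} (hw : w < i ∧ y ∈ Icc (a w) (a w + 1) ∧ ℓ w ≤ 1)
    {kL kR : Fin n}
    (hkL : kL < i ∧ ℓ kL = ℓ i ∧ (Icc (a kL) (a kL + 1) ∩ Icc (a i) (a i + 1)).Nonempty)
    (hkR : kR < i ∧ ℓ kR = ℓ i ∧ (Icc (a kR) (a kR + 1) ∩ Icc (a i) (a i + 1)).Nonempty)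
    (hLy : a kL + 1 < y) (hRy : y < a kR) : False := by
  obtain ⟨x1, hx1k, hx1i⟩ := hkL.2.2
  obtain ⟨x2, hx2k, hx2i⟩ := hkR.2.2
  simp only [mem_Icc] at hy hx1k hx1i hx2k hx2i
  obtain ⟨hwy1, hwy2⟩ : a w ≤ y ∧ y ≤ a w + 1 := by simpa [mem_Icc] using hw.2.1
  -- common point x* in I i, I w and one of I kL, I kR
  have key : ∀ x : ℝ, x ∈ Icc (a i) (a i + 1) → x ∈ Icc (a w) (a w + 1) →
      ∀ u : Fin n, u < i → ℓ u = 2 → x ∈ Icc (a u) (a u + 1) → False := by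
    intro x hxi hxw u hu hlu hxu
    have hcard := level_mem hℓ i hxi
    have hsub : ({w, u} : Set (Fin n)) ⊆
        { k : Fin n | k < i ∧ x ∈ Icc (a k) (a k + 1) ∧ ℓ k ≤ ℓ i } := by
      rintro m (rfl | rfl)
      · exact ⟨hw.1, hxw, by omega⟩
      · exact ⟨hu, hxu, by omega⟩
    have hne : w ≠ u := fun h => by rw [h] at hw; omega
    have := Set.ncard_le_ncard hsub (Set.toFinite _)
    rw [Set.ncard_pair hne] at this
    omega
  rcases le_or_gt (a w) (a kL + 1) with hcase | hcase
  · exact key (a kL + 1) (by constructor <;> linarith) (by constructor <;> linarith)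
      kL hkL.1 (by rw [hkL.2.1, h2]) (by constructor <;> linarith)
  · have hwR : a kR ≤ a w + 1 := by linarith
    exact key (a kR) (by constructor <;> linarith) (by constructor <;> linarith)
      kR hkR.1 (by rw [hkR.2.1, h2]) (by constructor <;> linarith)

lemma neighbors_le_one (hℓ : IsKTLevel (fun i => Icc (a i) (a i + 1)) ℓ) (i : Fin n)
    (h2 : ℓ i = 2) :
    ∃ k1 : Fin n, ∀ k : Fin n, k < i → ℓ k = ℓ i →
      (Icc (a k) (a k + 1) ∩ Icc (a i) (a i + 1)).Nonempty → k = k1 := by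
  classical
  have h2' : 2 ≤ ℓ i := le_of_eq h2.symm
  obtain ⟨y, hy, hcount, hpriv⟩ := private_point hℓ i h2'
  -- extract the unique level-1 interval w covering y
  have hSne : { m : Fin n | m < i ∧ y ∈ Icc (a m) (a m + 1) ∧ ℓ m ≤ ℓ i - 1 }.Nonempty := by
    rw [← Set.ncard_pos (Set.toFinite _)]
    omega
  obtain ⟨w, hw⟩ := hSne
  have hw' : w < i ∧ y ∈ Icc (a w) (a w + 1) ∧ ℓ w ≤ 1 := by
    refine ⟨hw.1, hw.2.1, ?_⟩
    have := hw.2.2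
    omega
  have hside : ∀ k : Fin n, k < i → ℓ k = ℓ i →
      (Icc (a k) (a k + 1) ∩ Icc (a i) (a i + 1)).Nonempty →
      a k + 1 < y ∨ y < a k := by
    intro k hk hlk _
    have := hpriv k (ne_of_lt hk) hlk
    simp only [mem_Icc, not_and, not_le] at this
    rcases le_or_gt (a k) y with h | h
    · exact Or.inl (this h)
    · exact Or.inr h
  by_cases hE : ∃ k : Fin n, k < i ∧ ℓ k = ℓ i ∧
      (Icc (a k) (a k + 1) ∩ Icc (a i) (a i + 1)).Nonempty
  · obtain ⟨k0, hk0⟩ := hE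
    refine ⟨k0, fun k hk hlk hne => ?_⟩
    rcases hside k hk hlk hne with h | h <;>
      rcases hside k0 hk0.1 hk0.2.1 hk0.2.2 with h0 | h0
    · exact side_uniq hℓ hy h2' ⟨hk, hlk, hne⟩ hk0 (Or.inl ⟨h, h0⟩)
    · exact absurd (no_opposite hℓ h2 hy hw' ⟨hk, hlk, hne⟩ hk0 h h0) not_false
    · exact absurd (no_opposite hℓ h2 hy hw' hk0 ⟨hk, hlk, hne⟩ h0 h) not_false
    · exact side_uniq hℓ hy h2' ⟨hk, hlk, hne⟩ hk0 (Or.inr ⟨h, h0⟩)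
  · exact ⟨i, fun k hk hlk hne => absurd ⟨k, hk, hlk, hne⟩ hE⟩

lemma level_one_no_neighbor (hℓ : IsKTLevel (fun i => Icc (a i) (a i + 1)) ℓ) (i : Fin n)
    (h1 : ℓ i = 1) : ∀ k : Fin n, k < i → ℓ k = ℓ i →
      (Icc (a k) (a k + 1) ∩ Icc (a i) (a i + 1)).Nonempty → False := by
  rintro k hk hlk ⟨x, hxk, hxi⟩
  have hcard := level_mem hℓ i hxi
  have hsub : ({k} : Set (Fin n)) ⊆
      { m : Fin n | m < i ∧ x ∈ Icc (a m) (a m + 1) ∧ ℓ m ≤ ℓ i } := by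
    rintro m rfl
    exact ⟨hk, hxk, le_of_eq hlk⟩
  have := Set.ncard_le_ncard hsub (Set.toFinite _)
  rw [Set.ncard_singleton] at this
  omega


variable {c : Fin n → ℕ}

lemma color_pos (hc : IsKTFirstFit (fun i => Icc (a i) (a i + 1)) ℓ c) (i : Fin n) :
    1 ≤ c i := (hc i).1.1

lemma color_le_one (hℓ : IsKTLevel (fun i => Icc (a i) (a i + 1)) ℓ)
    (hc : IsKTFirstFit (fun i => Icc (a i) (a i + 1)) ℓ c) (i : Fin n) (h1 : ℓ i = 1) :
    c i ≤ 1 := by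
  refine (hc i).2 ⟨le_refl 1, fun k hk hlk hne => ?_⟩
  exact absurd (level_one_no_neighbor hℓ i h1 k hk hlk hne) not_false

lemma color_le_two (hℓ : IsKTLevel (fun i => Icc (a i) (a i + 1)) ℓ)
    (hc : IsKTFirstFit (fun i => Icc (a i) (a i + 1)) ℓ c) (i : Fin n) (h2 : ℓ i = 2) :
    c i ≤ 2 := by
  obtain ⟨k1, hk1⟩ := neighbors_le_one hℓ i h2
  obtain ⟨m, hm1, hm2, hmne⟩ : ∃ m : ℕ, 1 ≤ m ∧ m ≤ 2 ∧ m ≠ c k1 := by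
    by_contra hcon
    push_neg at hcon
    have a1 := hcon 1 le_rfl (by norm_num)
    have a2 := hcon 2 (by norm_num) le_rfl
    omega
  refine le_trans ((hc i).2 ⟨hm1, fun k hk hlk hne => ?_⟩) hm2
  rw [hk1 k hk hlk hne]
  exact fun h => hmne h.symm

lemma color_le_three (hℓ : IsKTLevel (fun i => Icc (a i) (a i + 1)) ℓ)
    (hc : IsKTFirstFit (fun i => Icc (a i) (a i + 1)) ℓ c) (i : Fin n) (h3 : 2 ≤ ℓ i) :
    c i ≤ 3 := by
  obtain ⟨k1, k2, hk12⟩ := neighbors_le_two hℓ i h3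
  obtain ⟨m, hm1, hm2, hmne1, hmne2⟩ : ∃ m : ℕ, 1 ≤ m ∧ m ≤ 3 ∧ m ≠ c k1 ∧ m ≠ c k2 := by
    by_contra hcon
    push_neg at hcon
    have a1 := hcon 1 le_rfl (by norm_num)
    have a2 := hcon 2 (by norm_num) (by norm_num)
    have a3 := hcon 3 (by norm_num) le_rfl
    omega
  refine le_trans ((hc i).2 ⟨hm1, fun k hk hlk hne => ?_⟩) hm2
  rcases hk12 k hk hlk hne with rfl | rfl
  · exact fun h => hmne1 h.symm
  · exact fun h => hmne2 h.symm

lemma colorsAtLevel_le (hc : IsKTFirstFit (fun i => Icc (a i) (a i + 1)) ℓ c)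
    (j N : ℕ) (h : ∀ i : Fin n, ℓ i = j → c i ≤ N) : colorsAtLevel ℓ c j ≤ N := by
  have hsub : (Finset.univ.filter (fun i : Fin n => ℓ i = j)).image c ⊆ Finset.Icc 1 N := by
    intro m hm
    simp only [Finset.mem_image, Finset.mem_filter, Finset.mem_univ, true_and] at hm
    obtain ⟨i, hi, rfl⟩ := hm
    simp only [Finset.mem_Icc]
    exact ⟨color_pos hc i, h i hi⟩
  calc colorsAtLevel ℓ c j ≤ (Finset.Icc 1 N).card := Finset.card_le_card hsub
    _ = N := by rw [Nat.card_Icc]; omega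

lemma level_le_clique (hℓ : IsKTLevel (fun i => Icc (a i) (a i + 1)) ℓ) (i : Fin n) :
    ℓ i ≤ cliqueNum (fun i => Icc (a i) (a i + 1)) := by
  have hbdd : BddAbove { m : ℕ | ∃ x : ℝ,
      m = Set.ncard { k : Fin n | x ∈ Icc (a k) (a k + 1) } } := by
    refine ⟨n, ?_⟩
    rintro m ⟨x, rfl⟩
    calc Set.ncard { k : Fin n | x ∈ Icc (a k) (a k + 1) }
        ≤ Set.ncard (Set.univ : Set (Fin n)) :=
          Set.ncard_le_ncard (Set.subset_univ _) (Set.toFinite _)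
      _ = n := by simp [Set.ncard_univ]
  rcases eq_or_lt_of_le (level_pos hℓ i) with h1 | h2
  · rw [← h1]
    have hmem : (1 : ℕ) ≤ Set.ncard { k : Fin n | a i ∈ Icc (a k) (a k + 1) } := by
      have : ({i} : Set (Fin n)) ⊆ { k : Fin n | a i ∈ Icc (a k) (a k + 1) } := by
        rintro m rfl
        exact ⟨le_refl _, by linarith⟩
      have := Set.ncard_le_ncard this (Set.toFinite _)
      rwa [Set.ncard_singleton] at this
    exact le_trans hmem (le_csSup hbdd ⟨a i, rfl⟩)
  · obtain ⟨y, hy, hcount⟩ := witness_exists hℓ i h2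
    set S : Set (Fin n) := { k : Fin n | k < i ∧ y ∈ Icc (a k) (a k + 1) ∧ ℓ k ≤ ℓ i - 1 }
    have hiS : i ∉ S := fun h => absurd h.1 (lt_irrefl i)
    have hsub : insert i S ⊆ { k : Fin n | y ∈ Icc (a k) (a k + 1) } := by
      rintro m (rfl | hm)
      · exact hy
      · exact hm.2.1
    have hins : (insert i S).ncard = S.ncard + 1 := Set.ncard_insert_of_notMem hiS
    have hle := Set.ncard_le_ncard hsub (Set.toFinite _)
    have : ℓ i ≤ Set.ncard { k : Fin n | y ∈ Icc (a k) (a k + 1) } := by omega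
    exact le_trans this (le_csSup hbdd ⟨y, rfl⟩)


lemma total_le_sum (hℓ : IsKTLevel (fun i => Icc (a i) (a i + 1)) ℓ)
    (ω : ℕ) (hω : ∀ i : Fin n, 1 ≤ ℓ i ∧ ℓ i ≤ ω) :
    totalColors ℓ c ≤ ∑ j ∈ Finset.Icc 1 ω, colorsAtLevel ℓ c j := by
  classical
  have hsub : Finset.univ.image (fun i : Fin n => (ℓ i, c i)) ⊆
      (Finset.Icc 1 ω).biUnion (fun j =>
        ((Finset.univ.filter (fun i : Fin n => ℓ i = j)).image c).image (fun m => (j, m))) := by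
    intro p hp
    simp only [Finset.mem_image, Finset.mem_univ, true_and] at hp
    obtain ⟨i, rfl⟩ := hp
    rw [Finset.mem_biUnion]
    refine ⟨ℓ i, by simp [Finset.mem_Icc]; exact hω i, ?_⟩
    simp only [Finset.mem_image, Finset.mem_filter, Finset.mem_univ, true_and]
    exact ⟨c i, ⟨i, rfl, rfl⟩, rfl⟩
  calc totalColors ℓ c
      ≤ ((Finset.Icc 1 ω).biUnion (fun j =>
        ((Finset.univ.filter (fun i : Fin n => ℓ i = j)).image c).image (fun m => (j, m)))).card :=
        Finset.card_le_card hsub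
    _ ≤ ∑ j ∈ Finset.Icc 1 ω,
        (((Finset.univ.filter (fun i : Fin n => ℓ i = j)).image c).image (fun m => (j, m))).card :=
        Finset.card_biUnion_le
    _ = ∑ j ∈ Finset.Icc 1 ω, colorsAtLevel ℓ c j := by
        refine Finset.sum_congr rfl fun j _ => ?_
        rw [Finset.card_image_of_injective _ (fun m1 m2 h => congrArg Prod.snd h)]
        rfl

end KT

/-- For unit intervals with clique number `ω`: the Kierstead–Trotter
algorithm uses at most one color when `ω = 1` and at most `3ω - 3` colors
when `ω ≥ 2`; in particular, at most one color is used at level 1, at most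
two colors at level 2, and at most three colors at each level `j` with
`3 ≤ j ≤ ω`. -/
theorem kt_unit_color_breakdown (n : ℕ) (a : Fin n → ℝ) (ℓ c : Fin n → ℕ)
    (hℓ : IsKTLevel (fun i => Icc (a i) (a i + 1)) ℓ)
    (hc : IsKTFirstFit (fun i => Icc (a i) (a i + 1)) ℓ c) :
    (cliqueNum (fun i => Icc (a i) (a i + 1)) = 1 → totalColors ℓ c ≤ 1) ∧
    (2 ≤ cliqueNum (fun i => Icc (a i) (a i + 1)) →
      totalColors ℓ c ≤ 3 * cliqueNum (fun i => Icc (a i) (a i + 1)) - 3) ∧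
    colorsAtLevel ℓ c 1 ≤ 1 ∧
    colorsAtLevel ℓ c 2 ≤ 2 ∧
    (∀ j : ℕ, 3 ≤ j → j ≤ cliqueNum (fun i => Icc (a i) (a i + 1)) →
      colorsAtLevel ℓ c j ≤ 3) := by
  have hL1 : colorsAtLevel ℓ c 1 ≤ 1 :=
    colorsAtLevel_le hc 1 1 (fun i h => color_le_one hℓ hc i h)
  have hL2 : colorsAtLevel ℓ c 2 ≤ 2 :=
    colorsAtLevel_le hc 2 2 (fun i h => color_le_two hℓ hc i h)
  have hL3 : ∀ j : ℕ, 3 ≤ j → colorsAtLevel ℓ c j ≤ 3 := fun j hj =>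
    colorsAtLevel_le hc j 3 (fun i h => color_le_three hℓ hc i (by omega))
  refine ⟨?_, ?_, hL1, hL2, fun j hj _ => hL3 j hj⟩
  · intro hω
    have hl1 : ∀ i, ℓ i = 1 := fun i =>
      le_antisymm (hω ▸ level_le_clique hℓ i) (level_pos hℓ i)
    have hc1 : ∀ i, c i = 1 := fun i =>
      le_antisymm (color_le_one hℓ hc i (hl1 i)) (color_pos hc i)
    have hsub : Finset.univ.image (fun i : Fin n => (ℓ i, c i)) ⊆ {((1:ℕ),(1:ℕ))} := by
      intro p hp
      simp only [Finset.mem_image, Finset.mem_univ, true_and] at hp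
      obtain ⟨i, -, rfl⟩ := hp
      simp [hl1 i, hc1 i]
    exact le_trans (Finset.card_le_card hsub) (by simp)
  · intro hω
    have h1 := total_le_sum (c := c) hℓ (cliqueNum (fun i => Icc (a i) (a i + 1)))
      (fun i => ⟨level_pos hℓ i, level_le_clique hℓ i⟩)
    set ω := cliqueNum (fun i => Icc (a i) (a i + 1)) with hωdef
    have hdecomp : Finset.Icc 1 ω = insert 1 (insert 2 (Finset.Icc 3 ω)) := by
      ext j
      simp only [Finset.mem_Icc, Finset.mem_insert]
      omega
    rw [hdecomp, Finset.sum_insert (by simp [Finset.mem_Icc]),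
      Finset.sum_insert (by simp [Finset.mem_Icc])] at h1
    have h3 : ∑ j ∈ Finset.Icc 3 ω, colorsAtLevel ℓ c j ≤ (Finset.Icc 3 ω).card * 3 := by
      have := Finset.sum_le_card_nsmul (Finset.Icc 3 ω) (colorsAtLevel ℓ c) 3
        (fun j hj => hL3 j (by simp only [Finset.mem_Icc] at hj; omega))
      simpa [smul_eq_mul] using this
    rw [Nat.card_Icc] at h3
    omega
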